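/- arXiv:1302.0951 — 6 statements merged into one kernel-verified Lean document; each statement's English description precedes it below -/
import Mathlib

section
/- Let U be a finite set, A a finite set of functions from U to a finite set, p a probability distribution on A, and α, β ≥ 0. Suppose that for every u ∈ U, the sum over all u' ≠ u with p({A : A u = A u'}) > α/|ImA| of p({A : A u = A u'}) is at most β, where ImA = ⋃_{A∈A} {A u : u ∈ U}. Then for any subsets T, T' of U, ∑_{u∈T} ∑_{u'∈T'} p({A : A u = A u'}) ≤ |T ∩ T'| + |T||T'|·α/|ImA| + min(|T|,|T'|)·β. -/
/-!
Write `q u u'` for the probability that `u` and `u'` collide. For a fixed `u`, split the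
`u' ∈ T'` into `u' = u` (contributing at most `1`), the light `u'` with
`q u u' ≤ α / |ImA|`, and the heavy ones, whose total is at most `β` by (H3). Summing
over `u ∈ T` gives the bound with `|T| β`; since `q` is symmetric, the roles of `T` and
`T'` may be exchanged, which gives `min (|T|, |T'|) β`.
-/

open Finset
open scoped Classical

section HeavyRows

variable {U : Type*} [Fintype U] [DecidableEq U] {q : U → U → ℝ} {c β : ℝ}

theorem sum_le_of_heavy_sum_le {u : U} (hq0 : ∀ u', 0 ≤ q u u') (hq1 : q u u ≤ 1)
    (hc : 0 ≤ c) (hheavy : ∑ u' ∈ (univ.erase u).filter (fun u' => c < q u u'), q u u' ≤ β)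
    (T' : Finset U) :
    ∑ u' ∈ T', q u u' ≤ (if u ∈ T' then 1 else 0) + #T' * c + β := by
  have pointwise : ∀ u', q u u' ≤
      (if u = u' then 1 else 0) + c + if u' ≠ u ∧ c < q u u' then q u u' else 0 := by
    intro u'
    by_cases hu : u = u'
    · subst hu
      simp only [if_true, ne_eq, not_true_eq_false, false_and, if_false]
      linarith
    by_cases hlight : c < q u u'
    · simp only [hu, Ne.symm hu, hlight, if_false, if_true, ne_eq, not_false_eq_true, and_self]
      linarith
    · simp only [hu, hlight, if_false, and_false]
      linarith
  have heavy : ∑ u' ∈ T', (if u' ≠ u ∧ c < q u u' then q u u' else 0) ≤ β := by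
    rw [← sum_filter]
    refine le_trans (sum_le_sum_of_subset_of_nonneg ?_ fun u' _ _ => hq0 u') hheavy
    intro u' hu'
    simp only [mem_filter, mem_erase, mem_univ, and_true] at hu' ⊢
    exact hu'.2
  calc ∑ u' ∈ T', q u u'
      ≤ ∑ u' ∈ T', ((if u = u' then 1 else 0) + c
          + if u' ≠ u ∧ c < q u u' then q u u' else 0) := sum_le_sum fun u' _ => pointwise u'
    _ ≤ (if u ∈ T' then 1 else 0) + #T' * c + β := by
      rw [sum_add_distrib, sum_add_distrib, sum_ite_eq, sum_const, nsmul_eq_mul]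
      linarith

theorem sum_sum_le_of_heavy_sum_le (hq0 : ∀ u u', 0 ≤ q u u') (hq1 : ∀ u, q u u ≤ 1)
    (hc : 0 ≤ c)
    (hheavy : ∀ u, ∑ u' ∈ (univ.erase u).filter (fun u' => c < q u u'), q u u' ≤ β)
    (T T' : Finset U) :
    ∑ u ∈ T, ∑ u' ∈ T', q u u' ≤ #(T ∩ T') + #T * #T' * c + #T * β := by
  calc ∑ u ∈ T, ∑ u' ∈ T', q u u'
      ≤ ∑ u ∈ T, ((if u ∈ T' then 1 else 0) + #T' * c + β) :=
        sum_le_sum fun u _ => sum_le_of_heavy_sum_le (hq0 u) (hq1 u) hc (hheavy u) T'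
    _ = #(T ∩ T') + #T * #T' * c + #T * β := by
      rw [sum_add_distrib, sum_add_distrib, sum_boole, filter_mem_eq_inter, sum_const,
        sum_const, nsmul_eq_mul, nsmul_eq_mul, mul_assoc]

theorem sum_sum_le_min_of_heavy_sum_le (hsymm : ∀ u u', q u u' = q u' u)
    (hq0 : ∀ u u', 0 ≤ q u u') (hq1 : ∀ u, q u u ≤ 1) (hc : 0 ≤ c)
    (hheavy : ∀ u, ∑ u' ∈ (univ.erase u).filter (fun u' => c < q u u'), q u u' ≤ β)
    (T T' : Finset U) :
    ∑ u ∈ T, ∑ u' ∈ T', q u u' ≤ #(T ∩ T') + #T * #T' * c + (min #T #T' : ℕ) * β := by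
  rcases le_total #T #T' with h | h
  · rw [min_eq_left h]
    exact sum_sum_le_of_heavy_sum_le hq0 hq1 hc hheavy T T'
  · rw [min_eq_right h, sum_comm, inter_comm, mul_comm (#T : ℝ)]
    simp only [hsymm _ (_ : U)]
    exact sum_sum_le_of_heavy_sum_le hq0 hq1 hc hheavy T' T

end HeavyRows

section Collision

variable {U V : Type*} [DecidableEq V]

def collisionProb (𝒜 : Finset (U → V)) (p : (U → V) → ℝ) (u u' : U) : ℝ :=
  ∑ A ∈ 𝒜.filter (fun A => A u = A u'), p A

variable {𝒜 : Finset (U → V)} {p : (U → V) → ℝ}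

theorem collisionProb_comm (u u' : U) : collisionProb 𝒜 p u u' = collisionProb 𝒜 p u' u := by
  simp only [collisionProb, eq_comm]

theorem collisionProb_nonneg (hp0 : ∀ A, 0 ≤ p A) (u u' : U) : 0 ≤ collisionProb 𝒜 p u u' :=
  sum_nonneg fun A _ => hp0 A

theorem collisionProb_le_sum (hp0 : ∀ A, 0 ≤ p A) (u u' : U) :
    collisionProb 𝒜 p u u' ≤ ∑ A ∈ 𝒜, p A :=
  sum_le_sum_of_subset_of_nonneg (filter_subset _ _) fun A _ _ => hp0 A

end Collision

theorem stmt0_general {U V : Type*} [Fintype U] [DecidableEq U] [DecidableEq V]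
    (𝒜 : Finset (U → V)) (p : (U → V) → ℝ)
    (hp0 : ∀ A, 0 ≤ p A) (hp1 : ∑ A ∈ 𝒜, p A = 1)
    (α β : ℝ) (hα : 0 ≤ α)
    (Im𝒜 : Finset V)
    (hhash : ∀ u : U,
      ∑ u' ∈ (Finset.univ.erase u).filter
          (fun u' => α / (Im𝒜.card : ℝ) < ∑ A ∈ 𝒜.filter (fun A => A u = A u'), p A),
        ∑ A ∈ 𝒜.filter (fun A => A u = A u'), p A ≤ β) :
    ∀ T T' : Finset U,
      ∑ u ∈ T, ∑ u' ∈ T', ∑ A ∈ 𝒜.filter (fun A => A u = A u'), p A ≤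
        ((T ∩ T').card : ℝ) + (T.card : ℝ) * (T'.card : ℝ) * α / (Im𝒜.card : ℝ)
          + ((min T.card T'.card : ℕ) : ℝ) * β := by
  intro T T'
  rw [mul_div_assoc]
  exact sum_sum_le_min_of_heavy_sum_le (q := collisionProb 𝒜 p) collisionProb_comm
    (collisionProb_nonneg hp0) (fun u => hp1 ▸ collisionProb_le_sum hp0 u u)
    (div_nonneg hα (Nat.cast_nonneg _)) hhash T T'

/-- Strong hash condition (H3) implies the weak hash condition (H3'). -/
theorem stmt0 {U V : Type*} [Fintype U] [DecidableEq U] [Fintype V] [DecidableEq V]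
    (𝒜 : Finset (U → V)) (p : (U → V) → ℝ)
    (hp0 : ∀ A, 0 ≤ p A) (hp1 : ∑ A ∈ 𝒜, p A = 1)
    (α β : ℝ) (hα : 0 ≤ α) (hβ : 0 ≤ β)
    (Im𝒜 : Finset V) (hIm : Im𝒜 = 𝒜.biUnion fun A => Finset.image A Finset.univ)
    (hhash : ∀ u : U,
      ∑ u' ∈ (Finset.univ.erase u).filter
          (fun u' => α / (Im𝒜.card : ℝ) < ∑ A ∈ 𝒜.filter (fun A => A u = A u'), p A),
        ∑ A ∈ 𝒜.filter (fun A => A u = A u'), p A ≤ β) :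
    ∀ T T' : Finset U,
      ∑ u ∈ T, ∑ u' ∈ T', ∑ A ∈ 𝒜.filter (fun A => A u = A u'), p A ≤
        ((T ∩ T').card : ℝ) + (T.card : ℝ) * (T'.card : ℝ) * α / (Im𝒜.card : ℝ)
          + ((min T.card T'.card : ℕ) : ℝ) * β :=
  stmt0_general 𝒜 p hp0 hp1 α β hα Im𝒜 hhash
end

section
/- Let (A, p_A) and (B, p_B) be two ensembles of functions on a common finite domain U, satisfying the strong hash condition with parameters (α_A, β_A) and (α_B, β_B) respectively: for every u, ∑_{u'≠u : p_A({A : Au=Au'}) > α_A/|ImA|} p_A({A : Au=Au'}) ≤ β_A, and similarly for B. Define the product ensemble of functions (A,B) mapping u to (Au, Bu), with the product distribution p_{AB}(A,B) = p_A(A)p_B(B). Then the product ensemble satisfies the strong hash condition with parameters α_{AB} = α_A·α_B and β_{AB} = β_A + β_B, with respect to its image set Im(A×B) ⊆ ImA × ImB. -/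
/-!
Independence makes the collision probability of the product ensemble the product `q_A q_B` of
the two collision probabilities. Since `|Im(A×B)| ≤ |ImA| |ImB|`, the product threshold
`α_A α_B / |Im(A×B)|` is at least `(α_A / |ImA|)(α_B / |ImB|)`, so a pair `(u, u')` that is heavy
for the product is heavy for `A` or for `B`. On the first kind `q_A q_B ≤ q_A`, on the second
`q_A q_B ≤ q_B`, and the two hash conditions bound the two contributions by `β_A` and `β_B`.
-/

open Finset
open scoped Classical

lemma sum_filter_le_one {α : Type*} {s : Finset α} {p : α → ℝ} (hp0 : ∀ a, 0 ≤ p a)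
    (hp1 : ∑ a ∈ s, p a = 1) (P : α → Prop) [DecidablePred P] :
    ∑ a ∈ s.filter P, p a ≤ 1 :=
  hp1 ▸ sum_le_sum_of_subset_of_nonneg (filter_subset _ _) fun a _ _ => hp0 a

lemma sum_filter_lt_mul_le_add {ι : Type*} (s : Finset ι) {q r : ι → ℝ}
    (hq0 : ∀ i, 0 ≤ q i) (hq1 : ∀ i, q i ≤ 1) (hr0 : ∀ i, 0 ≤ r i) (hr1 : ∀ i, r i ≤ 1)
    {a b c : ℝ} (habc : a * b ≤ c) :
    ∑ i ∈ s.filter (fun i => c < q i * r i), q i * r i ≤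
      ∑ i ∈ s.filter (fun i => a < q i), q i + ∑ i ∈ s.filter (fun i => b < r i), r i := by
  have hpoint : ∀ i ∈ s.filter (fun i => c < q i * r i),
      q i * r i ≤ (if a < q i then q i else 0) + (if b < r i then r i else 0) := by
    intro i hi
    have hc := (mem_filter.1 hi).2
    split_ifs with hqa hrb
    · nlinarith [hq0 i, hr0 i, hq1 i, hr1 i]
    · nlinarith [hq0 i, hr1 i]
    · nlinarith [hr0 i, hq1 i]
    · nlinarith [hq0 i, hr0 i]
  calc ∑ i ∈ s.filter (fun i => c < q i * r i), q i * r i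
      ≤ ∑ i ∈ s.filter (fun i => c < q i * r i),
          ((if a < q i then q i else 0) + (if b < r i then r i else 0)) := sum_le_sum hpoint
    _ ≤ ∑ i ∈ s, ((if a < q i then q i else 0) + (if b < r i then r i else 0)) :=
        sum_le_sum_of_subset_of_nonneg (filter_subset _ _) fun i _ _ =>
          add_nonneg (by split_ifs <;> simp [hq0]) (by split_ifs <;> simp [hr0])
    _ = _ := by rw [sum_add_distrib, sum_filter, sum_filter]

section Images

variable {U V W : Type*} [Fintype U] [DecidableEq V] [DecidableEq W]

lemma biUnion_image_pair_subset_product (𝒜 : Finset (U → V)) (ℬ : Finset (U → W)) :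
    ((𝒜 ×ˢ ℬ).biUnion fun AB => univ.image fun u => (AB.1 u, AB.2 u)) ⊆
      (𝒜.biUnion fun A => univ.image A) ×ˢ ℬ.biUnion fun B => univ.image B := by
  intro x hx
  simp only [mem_biUnion, mem_product, mem_image, mem_univ, true_and] at hx ⊢
  obtain ⟨⟨A, B⟩, ⟨hA, hB⟩, u, rfl⟩ := hx
  exact ⟨⟨A, hA, u, rfl⟩, ⟨B, hB, u, rfl⟩⟩

lemma biUnion_image_pair_nonempty [Nonempty U] {𝒜 : Finset (U → V)} {ℬ : Finset (U → W)}
    (h𝒜 : 𝒜.Nonempty) (hℬ : ℬ.Nonempty) :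
    ((𝒜 ×ˢ ℬ).biUnion fun AB => univ.image fun u => (AB.1 u, AB.2 u)).Nonempty :=
  (h𝒜.product hℬ).biUnion fun _ _ => univ_nonempty.image _

end Images

lemma sum_collision_product_eq_mul {U V W : Type*} [DecidableEq V] [DecidableEq W]
    (𝒜 : Finset (U → V)) (ℬ : Finset (U → W))
    (pA : (U → V) → ℝ) (pB : (U → W) → ℝ) (u u' : U) :
    ∑ AB ∈ (𝒜 ×ˢ ℬ).filter (fun AB => AB.1 u = AB.1 u' ∧ AB.2 u = AB.2 u'),
        pA AB.1 * pB AB.2 =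
      (∑ A ∈ 𝒜.filter (fun A => A u = A u'), pA A) * ∑ B ∈ ℬ.filter (fun B => B u = B u'), pB B := by
  rw [filter_product (fun A : U → V => A u = A u') (fun B : U → W => B u = B u'), sum_mul_sum,
    sum_product]

theorem stmt1_general {U V W : Type*} [Fintype U] [DecidableEq U] [DecidableEq V]
    [DecidableEq W]
    (𝒜 : Finset (U → V)) (ℬ : Finset (U → W))
    (pA : (U → V) → ℝ) (pB : (U → W) → ℝ)
    (hpA0 : ∀ A, 0 ≤ pA A) (hpA1 : ∑ A ∈ 𝒜, pA A = 1)
    (hpB0 : ∀ B, 0 ≤ pB B) (hpB1 : ∑ B ∈ ℬ, pB B = 1)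
    (Im𝒜 : Finset V) (hImA : Im𝒜 = 𝒜.biUnion fun A => Finset.image A Finset.univ)
    (Imℬ : Finset W) (hImB : Imℬ = ℬ.biUnion fun B => Finset.image B Finset.univ)
    (Im𝒜ℬ : Finset (V × W))
    (hImAB : Im𝒜ℬ = (𝒜 ×ˢ ℬ).biUnion fun AB =>
      Finset.image (fun u => (AB.1 u, AB.2 u)) Finset.univ)
    (αA βA αB βB : ℝ) (hαA : 0 ≤ αA) (hαB : 0 ≤ αB)
    (hhashA : ∀ u : U, ∑ u' ∈ (Finset.univ.erase u).filter (fun u' =>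
        αA / (Im𝒜.card : ℝ) < ∑ A ∈ 𝒜.filter (fun A => A u = A u'), pA A),
      ∑ A ∈ 𝒜.filter (fun A => A u = A u'), pA A ≤ βA)
    (hhashB : ∀ u : U, ∑ u' ∈ (Finset.univ.erase u).filter (fun u' =>
        αB / (Imℬ.card : ℝ) < ∑ B ∈ ℬ.filter (fun B => B u = B u'), pB B),
      ∑ B ∈ ℬ.filter (fun B => B u = B u'), pB B ≤ βB) :
    ∀ u : U, ∑ u' ∈ (Finset.univ.erase u).filter (fun u' =>
        αA * αB / (Im𝒜ℬ.card : ℝ) < ∑ AB ∈ (𝒜 ×ˢ ℬ).filter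
          (fun AB => AB.1 u = AB.1 u' ∧ AB.2 u = AB.2 u'), pA AB.1 * pB AB.2),
      ∑ AB ∈ (𝒜 ×ˢ ℬ).filter (fun AB => AB.1 u = AB.1 u' ∧ AB.2 u = AB.2 u'),
        pA AB.1 * pB AB.2 ≤ βA + βB := by
  intro u
  have : Nonempty U := ⟨u⟩
  have hcard : (Im𝒜ℬ.card : ℝ) ≤ Im𝒜.card * Imℬ.card := by
    rw [hImA, hImB, hImAB]
    exact_mod_cast (card_le_card (biUnion_image_pair_subset_product 𝒜 ℬ)).trans_eq
      (card_product _ _)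
  have hpos : 0 < (Im𝒜ℬ.card : ℝ) := by
    rw [hImAB]
    have h𝒜 : 𝒜.Nonempty := nonempty_of_sum_ne_zero (hpA1 ▸ one_ne_zero)
    have hℬ : ℬ.Nonempty := nonempty_of_sum_ne_zero (hpB1 ▸ one_ne_zero)
    exact_mod_cast (biUnion_image_pair_nonempty h𝒜 hℬ).card_pos
  have hthreshold : αA / Im𝒜.card * (αB / Imℬ.card) ≤ αA * αB / Im𝒜ℬ.card := by
    rw [div_mul_div_comm]
    exact div_le_div_of_nonneg_left (mul_nonneg hαA hαB) hpos hcard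
  simp only [sum_collision_product_eq_mul]
  exact (sum_filter_lt_mul_le_add _ (fun _ => sum_nonneg fun A _ => hpA0 A)
    (fun _ => sum_filter_le_one hpA0 hpA1 _) (fun _ => sum_nonneg fun B _ => hpB0 B)
    (fun _ => sum_filter_le_one hpB0 hpB1 _) hthreshold).trans
    (add_le_add (hhashA u) (hhashB u))

/-- The product of two ensembles satisfying the strong hash condition satisfies the
strong hash condition with parameters `(αA * αB, βA + βB)`. -/
theorem stmt1 {U V W : Type*} [Fintype U] [DecidableEq U] [Fintype V] [DecidableEq V]
    [Fintype W] [DecidableEq W]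
    (𝒜 : Finset (U → V)) (ℬ : Finset (U → W))
    (pA : (U → V) → ℝ) (pB : (U → W) → ℝ)
    (hpA0 : ∀ A, 0 ≤ pA A) (hpA1 : ∑ A ∈ 𝒜, pA A = 1)
    (hpB0 : ∀ B, 0 ≤ pB B) (hpB1 : ∑ B ∈ ℬ, pB B = 1)
    (Im𝒜 : Finset V) (hImA : Im𝒜 = 𝒜.biUnion fun A => Finset.image A Finset.univ)
    (Imℬ : Finset W) (hImB : Imℬ = ℬ.biUnion fun B => Finset.image B Finset.univ)
    (Im𝒜ℬ : Finset (V × W))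
    (hImAB : Im𝒜ℬ = (𝒜 ×ˢ ℬ).biUnion fun AB =>
      Finset.image (fun u => (AB.1 u, AB.2 u)) Finset.univ)
    (αA βA αB βB : ℝ) (hαA : 0 ≤ αA) (hβA : 0 ≤ βA) (hαB : 0 ≤ αB) (hβB : 0 ≤ βB)
    (hhashA : ∀ u : U, ∑ u' ∈ (Finset.univ.erase u).filter (fun u' =>
        αA / (Im𝒜.card : ℝ) < ∑ A ∈ 𝒜.filter (fun A => A u = A u'), pA A),
      ∑ A ∈ 𝒜.filter (fun A => A u = A u'), pA A ≤ βA)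
    (hhashB : ∀ u : U, ∑ u' ∈ (Finset.univ.erase u).filter (fun u' =>
        αB / (Imℬ.card : ℝ) < ∑ B ∈ ℬ.filter (fun B => B u = B u'), pB B),
      ∑ B ∈ ℬ.filter (fun B => B u = B u'), pB B ≤ βB) :
    ∀ u : U, ∑ u' ∈ (Finset.univ.erase u).filter (fun u' =>
        αA * αB / (Im𝒜ℬ.card : ℝ) < ∑ AB ∈ (𝒜 ×ˢ ℬ).filter
          (fun AB => AB.1 u = AB.1 u' ∧ AB.2 u = AB.2 u'), pA AB.1 * pB AB.2),
      ∑ AB ∈ (𝒜 ×ˢ ℬ).filter (fun AB => AB.1 u = AB.1 u' ∧ AB.2 u = AB.2 u'),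
        pA AB.1 * pB AB.2 ≤ βA + βB :=
  stmt1_general 𝒜 ℬ pA pB hpA0 hpA1 hpB0 hpB1 Im𝒜 hImA Imℬ hImB Im𝒜ℬ hImAB αA βA αB βB hαA hαB
    hhashA hhashB
end

section
/- Let U be a finite set and (A, p_A) an ensemble of functions from U into a finite set satisfying the weak hash inequality: for all T, T' ⊆ U, ∑_{u∈T, u'∈T'} p_A({A : Au = Au'}) ≤ |T∩T'| + |T||T'|·α/|ImA| + min(|T|,|T'|)·β. Then for every G ⊆ U and every u ∈ U, the probability p_A({A : (G \ {u}) ∩ C_A(Au) ≠ ∅}) is at most |G|·α/|ImA| + β, where C_A(c) = {u' : Au' = c}. -/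
/-!
By the union bound the collision probability is at most the weak-hash sum for
`T = G \ {u}` and `T' = {u}`; these sets are disjoint, so only the `α` and `β` terms remain.
-/

open Finset
open scoped Classical

theorem Finset.sum_filter_exists_le_sum_sum_filter {ι α M : Type*} [AddCommMonoid M]
    [PartialOrder M] [IsOrderedAddMonoid M] (s : Finset ι) (t : Finset α) (P : ι → α → Prop)
    [∀ i a, Decidable (P i a)] {f : α → M} (hf : ∀ a, 0 ≤ f a) :
    ∑ a ∈ t with ∃ i ∈ s, P i a, f a ≤ ∑ i ∈ s, ∑ a ∈ t with P i a, f a := by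
  simp only [sum_filter]
  rw [sum_comm]
  refine sum_le_sum fun a _ => ?_
  have hterm : ∀ i, 0 ≤ if P i a then f a else 0 := fun i => by split_ifs <;> simp [hf]
  split_ifs with h
  · obtain ⟨i, hi, hPi⟩ := h
    simpa [hPi] using single_le_sum (fun i _ => hterm i) hi
  · exact sum_nonneg fun i _ => hterm i

theorem stmt2_general {U V : Type*} [DecidableEq U] [DecidableEq V]
    (𝒜 : Finset (U → V)) (p : (U → V) → ℝ)
    (hp0 : ∀ A, 0 ≤ p A)
    (α β : ℝ) (hα : 0 ≤ α) (hβ : 0 ≤ β)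
    (Im𝒜 : Finset V)
    (hweak : ∀ T T' : Finset U,
      ∑ u ∈ T, ∑ u' ∈ T', ∑ A ∈ 𝒜.filter (fun A => A u = A u'), p A ≤
        ((T ∩ T').card : ℝ) + (T.card : ℝ) * (T'.card : ℝ) * α / (Im𝒜.card : ℝ)
          + ((min T.card T'.card : ℕ) : ℝ) * β) :
    ∀ (G : Finset U) (u : U),
      ∑ A ∈ 𝒜.filter (fun A => ∃ u' ∈ G.erase u, A u' = A u), p A ≤
        (G.card : ℝ) * α / (Im𝒜.card : ℝ) + β := by
  intro G u
  have hcollide := hweak (G.erase u) {u}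
  simp only [sum_singleton, card_singleton, Nat.cast_one, mul_one,
    inter_singleton_of_notMem (notMem_erase u G), card_empty, Nat.cast_zero, zero_add] at hcollide
  have hα_term : ((G.erase u).card : ℝ) * α / Im𝒜.card ≤ G.card * α / Im𝒜.card := by
    gcongr
    exact erase_subset u G
  have hβ_term : ((min (G.erase u).card 1 : ℕ) : ℝ) * β ≤ β :=
    mul_le_of_le_one_left hβ (by exact_mod_cast min_le_right _ _)
  calc ∑ A ∈ 𝒜.filter (fun A => ∃ u' ∈ G.erase u, A u' = A u), p A
      ≤ ∑ u' ∈ G.erase u, ∑ A ∈ 𝒜.filter (fun A => A u' = A u), p A :=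
        sum_filter_exists_le_sum_sum_filter (G.erase u) 𝒜 (fun u' A => A u' = A u) hp0
    _ ≤ G.card * α / Im𝒜.card + β := by linarith

/-- Collision-resistance property derived from the weak hash inequality. -/
theorem stmt2 {U V : Type*} [Fintype U] [DecidableEq U] [Fintype V] [DecidableEq V]
    (𝒜 : Finset (U → V)) (p : (U → V) → ℝ)
    (hp0 : ∀ A, 0 ≤ p A) (hp1 : ∑ A ∈ 𝒜, p A = 1)
    (α β : ℝ) (hα : 0 ≤ α) (hβ : 0 ≤ β)
    (Im𝒜 : Finset V) (hIm : Im𝒜 = 𝒜.biUnion fun A => Finset.image A Finset.univ)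
    (hweak : ∀ T T' : Finset U,
      ∑ u ∈ T, ∑ u' ∈ T', ∑ A ∈ 𝒜.filter (fun A => A u = A u'), p A ≤
        ((T ∩ T').card : ℝ) + (T.card : ℝ) * (T'.card : ℝ) * α / (Im𝒜.card : ℝ)
          + ((min T.card T'.card : ℕ) : ℝ) * β) :
    ∀ (G : Finset U) (u : U),
      ∑ A ∈ 𝒜.filter (fun A => ∃ u' ∈ G.erase u, A u' = A u), p A ≤
        (G.card : ℝ) * α / (Im𝒜.card : ℝ) + β :=
  stmt2_general 𝒜 p hp0 α β hα hβ Im𝒜 hweak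
end

section
/- Let U be a finite set, (A, p_A) an ensemble of functions from U to a finite set satisfying the weak hash inequality with parameters (α, β), G ⊆ U, and μ a probability distribution supported on G. Then the expectation over A drawn from p_A of μ({u : (G \ {u}) ∩ C_A(Au) ≠ ∅}) is at most |G|·α/|ImA| + β. -/
open Finset

/-
Averaging over `A` and exchanging the order of summation, the quantity to bound is
`∑ u, μ u * P_A(u collides with some u' ∈ G \ {u})`. For `u ∈ G`, the union bound over `u'`
and the weak hash inequality with `T = {u}` and `T' = G` bound this collision probability by
`|G| α / |Im 𝒜| + β`: the diagonal term `u' = u` contributes exactly `|T ∩ T'| = 1`.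
Since `μ` is a probability distribution supported on `G`, the average is bounded likewise.
-/

namespace Finset

theorem sum_filter_exists_le_sum_sum_filter_s3 {ι α β : Type*} [AddCommMonoid β] [PartialOrder β]
    [IsOrderedAddMonoid β] (S : Finset ι) (s : Finset α) (P : ι → α → Prop)
    [∀ i, DecidablePred (P i)] [DecidablePred fun a => ∃ i ∈ S, P i a] {f : α → β}
    (hf : ∀ a ∈ s, 0 ≤ f a) :
    ∑ a ∈ s.filter (fun a => ∃ i ∈ S, P i a), f a ≤ ∑ i ∈ S, ∑ a ∈ s.filter (P i), f a := by
  rw [sum_comm' (t' := s) (s' := fun a => S.filter (P · a)) (by grind),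
    sum_filter]
  refine sum_le_sum fun a ha => ?_
  split_ifs with h
  · obtain ⟨i, hi, hPi⟩ := h
    exact single_le_sum (f := fun _ => f a) (fun _ _ => hf a ha) (mem_filter.2 ⟨hi, hPi⟩)
  · exact sum_nonneg fun _ _ => hf a ha

theorem sum_mul_sum_filter_comm {α γ R : Type*} [CommSemiring R] (s : Finset α) (t : Finset γ)
    (Q : α → γ → Prop) [∀ a, DecidablePred (Q a)] [∀ c, DecidablePred (Q · c)]
    (f : α → R) (g : γ → R) :
    ∑ a ∈ s, f a * ∑ c ∈ t.filter (Q a), g c = ∑ c ∈ t, g c * ∑ a ∈ s.filter (Q · c), f a := by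
  simp only [mul_sum, sum_filter, mul_ite, mul_zero]
  rw [sum_comm]
  simp only [mul_comm]

end Finset

section WeakHash

variable {U V : Type*} [DecidableEq U] [DecidableEq V]

def WeakHashInequality (𝒜 : Finset (U → V)) (p : (U → V) → ℝ) (α β : ℝ) (Im𝒜 : Finset V) :
    Prop :=
  ∀ T T' : Finset U,
    ∑ u ∈ T, ∑ u' ∈ T', ∑ A ∈ 𝒜.filter (fun A => A u = A u'), p A ≤
      ((T ∩ T').card : ℝ) + (T.card : ℝ) * (T'.card : ℝ) * α / (Im𝒜.card : ℝ)
        + ((min T.card T'.card : ℕ) : ℝ) * β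

theorem WeakHashInequality.sum_erase_collision_le {𝒜 : Finset (U → V)}
    {p : (U → V) → ℝ} {α β : ℝ} {Im𝒜 : Finset V} (h : WeakHashInequality 𝒜 p α β Im𝒜)
    (hp1 : ∑ A ∈ 𝒜, p A = 1) {G : Finset U} {u : U} (hu : u ∈ G) :
    ∑ u' ∈ G.erase u, ∑ A ∈ 𝒜.filter (fun A => A u = A u'), p A ≤
      (G.card : ℝ) * α / (Im𝒜.card : ℝ) + β := by
  have hweak := h {u} G
  have hdiag : ∑ A ∈ 𝒜.filter (fun A => A u = A u), p A = 1 := by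
    rw [filter_true_of_mem fun _ _ => rfl, hp1]
  rw [sum_singleton, ← add_sum_erase G _ hu, hdiag, singleton_inter_of_mem hu, card_singleton,
    min_eq_left (card_pos.mpr ⟨u, hu⟩)] at hweak
  simp only [Nat.cast_one, one_mul] at hweak
  linarith

end WeakHash

theorem stmt3_general {U V : Type*} [Fintype U] [DecidableEq U] [DecidableEq V]
    (𝒜 : Finset (U → V)) (p : (U → V) → ℝ)
    (hp0 : ∀ A, 0 ≤ p A) (hp1 : ∑ A ∈ 𝒜, p A = 1)
    (α β : ℝ)
    (Im𝒜 : Finset V)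
    (hweak : ∀ T T' : Finset U,
      ∑ u ∈ T, ∑ u' ∈ T', ∑ A ∈ 𝒜.filter (fun A => A u = A u'), p A ≤
        ((T ∩ T').card : ℝ) + (T.card : ℝ) * (T'.card : ℝ) * α / (Im𝒜.card : ℝ)
          + ((min T.card T'.card : ℕ) : ℝ) * β)
    (G : Finset U) (μ : U → ℝ)
    (hμ0 : ∀ u, 0 ≤ μ u) (hμ1 : ∑ u ∈ G, μ u = 1) (hμG : ∀ u ∉ G, μ u = 0) :
    ∑ A ∈ 𝒜, p A *
        ∑ u ∈ Finset.univ.filter (fun u => ∃ u' ∈ G.erase u, A u' = A u), μ u ≤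
      (G.card : ℝ) * α / (Im𝒜.card : ℝ) + β := by
  set B := (G.card : ℝ) * α / (Im𝒜.card : ℝ) + β
  have hcollision : ∀ u ∈ G,
      ∑ A ∈ 𝒜.filter (fun A => ∃ u' ∈ G.erase u, A u' = A u), p A ≤ B := fun u hu =>
    calc _ ≤ ∑ u' ∈ G.erase u, ∑ A ∈ 𝒜.filter (fun A => A u = A u'), p A := by
          simp only [fun u' => filter_congr (s := 𝒜) (p := fun A => A u = A u') fun A _ => eq_comm]
          exact sum_filter_exists_le_sum_sum_filter_s3 _ _ _ fun A _ => hp0 A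
      _ ≤ B := WeakHashInequality.sum_erase_collision_le hweak hp1 hu
  have hμ_univ : ∑ u, μ u = 1 := by
    rw [← hμ1]
    exact (sum_subset G.subset_univ fun u _ hu => hμG u hu).symm
  rw [sum_mul_sum_filter_comm]
  calc _ ≤ ∑ u, μ u * B := sum_le_sum fun u _ => by
          by_cases hu : u ∈ G
          · exact mul_le_mul_of_nonneg_left (hcollision u hu) (hμ0 u)
          · simp [hμG u hu]
    _ = B := by rw [← sum_mul, hμ_univ, one_mul]

/-- Averaged collision-resistance: the expected probability (over the ensemble) that a
`μ`-random element of `G` collides with another element of `G` is bounded. -/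
theorem stmt3 {U V : Type*} [Fintype U] [DecidableEq U] [Fintype V] [DecidableEq V]
    (𝒜 : Finset (U → V)) (p : (U → V) → ℝ)
    (hp0 : ∀ A, 0 ≤ p A) (hp1 : ∑ A ∈ 𝒜, p A = 1)
    (α β : ℝ) (hα : 0 ≤ α) (hβ : 0 ≤ β)
    (Im𝒜 : Finset V) (hIm : Im𝒜 = 𝒜.biUnion fun A => Finset.image A Finset.univ)
    (hweak : ∀ T T' : Finset U,
      ∑ u ∈ T, ∑ u' ∈ T', ∑ A ∈ 𝒜.filter (fun A => A u = A u'), p A ≤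
        ((T ∩ T').card : ℝ) + (T.card : ℝ) * (T'.card : ℝ) * α / (Im𝒜.card : ℝ)
          + ((min T.card T'.card : ℕ) : ℝ) * β)
    (G : Finset U) (μ : U → ℝ)
    (hμ0 : ∀ u, 0 ≤ μ u) (hμ1 : ∑ u ∈ G, μ u = 1) (hμG : ∀ u ∉ G, μ u = 0) :
    ∑ A ∈ 𝒜, p A *
        ∑ u ∈ Finset.univ.filter (fun u => ∃ u' ∈ G.erase u, A u' = A u), μ u ≤
      (G.card : ℝ) * α / (Im𝒜.card : ℝ) + β :=
  stmt3_general 𝒜 p hp0 hp1 α β Im𝒜 hweak G μ hμ0 hμ1 hμG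
end

section
/- Let (U, V) = {(Uⁿ, Vⁿ)} be a sequence of pairs of random variables with Uⁿ, Vⁿ taking values in finite sets. Suppose there exist functions ψₙ such that P(ψₙ(Vⁿ) ≠ Uⁿ) → 0 as n → ∞. Then the spectral conditional sup-entropy rate satisfies H̄(U|V) = 0, i.e., for every γ > 0, lim_{n→∞} P( (1/n)·log(1/μ_{Uⁿ|Vⁿ}(Uⁿ|Vⁿ)) > γ ) = 0. -/
/-!
Put `b = 2^(-γ)`. If `μ(u, v) > 0` and the normalized self-information `(1/n) log₂ (μ_V(v) / μ(u, v))`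
exceeds `γ`, then `μ(u, v) ≤ bⁿ μ_V(v)`. Splitting such pairs according to whether `ψₙ` decodes them
correctly, the incorrectly decoded ones carry at most the error probability, while the correctly
decoded ones contain at most one `u` per `v` and so carry at most `bⁿ ∑_v μ_V(v) = bⁿ`.
Both bounds tend to zero.
-/

open Finset Filter
open scoped Classical

lemma le_rpow_neg_pow_mul_of_lt_inv_mul_logb {m s γ : ℝ} {n : ℕ} (hn : 0 < n) (hm : 0 ≤ m)
    (hms : m ≤ s) (h : γ < 1 / (n : ℝ) * Real.logb 2 (1 / (m / s))) :
    m ≤ ((2 : ℝ) ^ (-γ)) ^ n * s := by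
  rcases hm.eq_or_lt with rfl | hm
  · exact mul_nonneg (by positivity) hms
  have hs : 0 < s := hm.trans_le hms
  have hn' : (0 : ℝ) < n := by exact_mod_cast hn
  rw [one_div_div, one_div_mul_eq_div, lt_div_iff₀ hn',
    Real.lt_logb_iff_rpow_lt one_lt_two (div_pos hs hm), lt_div_iff₀ hm] at h
  rw [← Real.rpow_mul_natCast zero_le_two, neg_mul, Real.rpow_neg zero_le_two, inv_mul_eq_div,
    le_div_iff₀ (by positivity)]
  linarith

section Decoding

variable {α β : Type*} [Fintype α] [Fintype β]

lemma sum_ite_decode_eq (ψ : β → α) (f : β → ℝ) :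
    ∑ q : α × β, (if ψ q.2 = q.1 then f q.2 else 0) = ∑ v, f v := by
  rw [Fintype.sum_prod_type_right]
  simp [Finset.sum_ite_eq]

lemma sum_ite_le_decoding_error_add (p : α × β → ℝ) (hp0 : ∀ q, 0 ≤ p q) (hp1 : ∑ q, p q = 1)
    (ψ : β → α) {c : ℝ} (hc : 0 ≤ c) (E : α × β → Prop)
    (hE : ∀ q, E q → p q ≤ c * ∑ u, p (u, q.2)) :
    ∑ q, (if E q then p q else 0) ≤ (∑ q, if ψ q.2 ≠ q.1 then p q else 0) + c := by
  calc ∑ q, (if E q then p q else 0)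
      ≤ ∑ q, ((if ψ q.2 ≠ q.1 then p q else 0) +
          if ψ q.2 = q.1 then c * ∑ u, p (u, q.2) else 0) := by
        gcongr with q
        by_cases hq : ψ q.2 = q.1
        · simp only [hq, ne_eq, not_true_eq_false, if_false, if_true, zero_add]
          split_ifs with he
          · exact hE q he
          · exact mul_nonneg hc (sum_nonneg fun u _ => hp0 _)
        · simp only [hq, ne_eq, not_false_eq_true, if_true, if_false, add_zero]
          split_ifs
          · exact le_rfl
          · exact hp0 q
    _ = (∑ q, if ψ q.2 ≠ q.1 then p q else 0) + c := by
      rw [sum_add_distrib, sum_ite_decode_eq ψ fun v => c * ∑ u, p (u, v), ← mul_sum, ← Fintype.sum_prod_type_right, hp1,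
        mul_one]

end Decoding

/-- Fano-type lemma: if decoders `ψₙ` achieve vanishing error probability, then the
spectral conditional sup-entropy rate of `U` given `V` is zero, i.e. for every `γ > 0`
the probability that the normalized conditional self-information exceeds `γ` vanishes. -/
theorem stmt6 (U V : ℕ → Type*) [∀ n, Fintype (U n)] [∀ n, Fintype (V n)]
    (μ : ∀ n, U n × V n → ℝ)
    (hμ0 : ∀ n q, 0 ≤ μ n q) (hμ1 : ∀ n, ∑ q : U n × V n, μ n q = 1)
    (ψ : ∀ n, V n → U n)
    (herr : Tendsto (fun n => ∑ q : U n × V n, if ψ n q.2 ≠ q.1 then μ n q else 0)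
      atTop (nhds 0)) :
    ∀ γ : ℝ, 0 < γ →
      Tendsto (fun n => ∑ q : U n × V n,
          if γ < (1 / (n : ℝ)) *
              Real.logb 2 (1 / (μ n q / (∑ u : U n, μ n (u, q.2)))) then μ n q else 0)
        atTop (nhds 0) := by
  intro γ hγ
  have hb : (2 : ℝ) ^ (-γ) < 1 := Real.rpow_lt_one_of_one_lt_of_neg one_lt_two (neg_neg_of_pos hγ)
  have hbound := herr.add (tendsto_pow_atTop_nhds_zero_of_lt_one (by positivity) hb)
  rw [add_zero] at hbound
  refine tendsto_of_tendsto_of_tendsto_of_le_of_le' tendsto_const_nhds hbound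
    (Eventually.of_forall fun n => sum_nonneg fun q _ => ite_nonneg (hμ0 n q) le_rfl) ?_
  filter_upwards [eventually_gt_atTop 0] with n hn
  refine sum_ite_le_decoding_error_add (μ n) (hμ0 n) (hμ1 n) (ψ n) (by positivity) _
    fun q h => le_rpow_neg_pow_mul_of_lt_inv_mul_logb hn (hμ0 n q) ?_ h
  exact single_le_sum (f := fun u => μ n (u, q.2)) (fun u _ => hμ0 n _) (mem_univ q.1)
end

section
/- Fix n and finite sets, and let U, V be random variables, ψ a function with P(ψ(V) ≠ U) = δ. Then for every γ > 0, P( (1/n)·log(1/μ_{U|V}(U|V)) ≥ γ ) ≤ δ + 2^{−nγ}. -/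
open Finset
open scoped Classical

/-!
On the event `ψ(V) ≠ U` the probability is at most `δ`. On the complementary event the pair
`(u, v)` is determined by `v`, and the threshold condition says `μ_{U|V}(u|v) ≤ 2^{-nγ}`, so
its contribution is at most `∑_v 2^{-nγ} μ_V(v) = 2^{-nγ}`.
-/

theorem le_rpow_neg_mul_of_le_logb_one_div_div {β a b t : ℝ} (hβ : 1 < β) (ha : 0 ≤ a)
    (hab : a ≤ b) (h : t ≤ Real.logb β (1 / (a / b))) : a ≤ β ^ (-t) * b := by
  rcases ha.eq_or_lt with rfl | ha
  · exact mul_nonneg (Real.rpow_nonneg (by linarith) _) hab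
  have hb : 0 < b := ha.trans_le hab
  rw [one_div_div, Real.le_logb_iff_rpow_le hβ (div_pos hb ha), le_div_iff₀ ha] at h
  rw [Real.rpow_neg (by linarith), inv_mul_eq_div, le_div_iff₀' (by positivity)]
  exact h

theorem Fintype.sum_prod_ite_eq_apply {U V M : Type*} [Fintype U] [Fintype V]
    [AddCommMonoid M] [DecidableEq U] (ψ : V → U) (f : V → M) :
    ∑ q : U × V, (if ψ q.2 = q.1 then f q.2 else 0) = ∑ v, f v := by
  rw [Fintype.sum_prod_type_right]
  simp only [sum_ite_eq]

theorem stmt7_general {U V : Type*} [Fintype U] [Fintype V]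
    (μ : U × V → ℝ) (hμ0 : ∀ q, 0 ≤ μ q) (hμ1 : ∑ q : U × V, μ q = 1)
    (ψ : V → U) (δ : ℝ)
    (hδ : δ = ∑ q : U × V, if ψ q.2 ≠ q.1 then μ q else 0)
    (n : ℕ) (hn : 1 ≤ n) (γ : ℝ) :
    ∑ q : U × V,
        (if γ ≤ (1 / (n : ℝ)) *
            Real.logb 2 (1 / (μ q / (∑ u : U, μ (u, q.2)))) then μ q else 0) ≤
      δ + (2 : ℝ) ^ (-((n : ℝ) * γ)) := by
  set c : ℝ := (2 : ℝ) ^ (-((n : ℝ) * γ))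
  set μV : V → ℝ := fun v => ∑ u : U, μ (u, v)
  have hn_pos : (0 : ℝ) < n := by exact_mod_cast hn
  have hc : 0 ≤ c := by positivity
  have hμV : ∀ v, 0 ≤ μV v := fun v => sum_nonneg fun u _ => hμ0 (u, v)
  have hsmall : ∀ q, γ ≤ 1 / (n : ℝ) * Real.logb 2 (1 / (μ q / μV q.2)) → μ q ≤ c * μV q.2 :=
    fun q h => le_rpow_neg_mul_of_le_logb_one_div_div one_lt_two (hμ0 q)
      (single_le_sum (fun u _ => hμ0 (u, q.2)) (mem_univ q.1))
      (by rwa [one_div_mul_eq_div, le_div_iff₀' hn_pos] at h)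
  calc ∑ q : U × V, (if γ ≤ 1 / (n : ℝ) * Real.logb 2 (1 / (μ q / μV q.2)) then μ q else 0)
      ≤ ∑ q : U × V, ((if ψ q.2 ≠ q.1 then μ q else 0) +
          if ψ q.2 = q.1 then c * μV q.2 else 0) := by
        refine sum_le_sum fun q _ => ?_
        by_cases hψ : ψ q.2 = q.1
        · simp only [hψ, ne_eq, not_true_eq_false, if_false, if_true, zero_add]
          split_ifs with h
          exacts [hsmall q h, mul_nonneg hc (hμV _)]
        · simp only [hψ, ne_eq, not_false_eq_true, if_true, if_false, add_zero]
          split_ifs <;> simp [hμ0 q]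
    _ = δ + c * ∑ v, μV v := by
        rw [sum_add_distrib, Fintype.sum_prod_ite_eq_apply ψ (c * μV ·), mul_sum, hδ]
    _ = δ + c := by
        rw [← Fintype.sum_prod_type_right, hμ1, mul_one]

/-- Single-`n` quantitative Fano-type bound:
`P((1/n)·log(1/μ_{U|V}(U|V)) ≥ γ) ≤ P(ψ(V) ≠ U) + 2^{-nγ}`. -/
theorem stmt7 {U V : Type*} [Fintype U] [Fintype V]
    (μ : U × V → ℝ) (hμ0 : ∀ q, 0 ≤ μ q) (hμ1 : ∑ q : U × V, μ q = 1)
    (ψ : V → U) (δ : ℝ)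
    (hδ : δ = ∑ q : U × V, if ψ q.2 ≠ q.1 then μ q else 0)
    (n : ℕ) (hn : 1 ≤ n) (γ : ℝ) (hγ : 0 < γ) :
    ∑ q : U × V,
        (if γ ≤ (1 / (n : ℝ)) *
            Real.logb 2 (1 / (μ q / (∑ u : U, μ (u, q.2)))) then μ q else 0) ≤
      δ + (2 : ℝ) ^ (-((n : ℝ) * γ)) :=
  stmt7_general μ hμ0 hμ1 ψ δ hδ n hn γ
end
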